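/- Let A be a nontrivial closed class of decision tables from M_2^∞ and ψ a bounded complexity measure. If the function Z_{ψ,A} is not everywhere defined, then the function H^∞_{ψ,A} is not everywhere defined. -/

import Mathlib

open Classical

noncomputable section

/-- A decision table with many-valued decisions over `E_k = {0,…,k-1}`.
Columns are labeled with attributes `f_i` identified with their indices `i : ℕ`;
a row is a function `ℕ → ℕ` supported on the attribute set, with values `< k`;
each row is labeled with a nonempty finite set of decisions. -/
structure Table (k : ℕ) where
  attrs : Finset ℕ
  rows : Finset (ℕ → ℕ)
  dec : (ℕ → ℕ) → Finset ℕ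
  rows_mem : ∀ r ∈ rows, (∀ i ∈ attrs, r i < k) ∧ (∀ i ∉ attrs, r i = 0)
  dec_nonempty : ∀ r ∈ rows, (dec r).Nonempty

namespace Table

variable {k : ℕ}

/-- a row satisfies a word (a list of (attribute, value) pairs) -/
def rowSat (r : ℕ → ℕ) (α : List (ℕ × ℕ)) : Prop := ∀ q ∈ α, r q.1 = q.2

/-- the word belongs to `Ω_k(T)` -/
def wordOk (T : Table k) (α : List (ℕ × ℕ)) : Prop := ∀ q ∈ α, q.1 ∈ T.attrs ∧ q.2 < k

/-- the subtable `Tα` -/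
def applyWord (T : Table k) (α : List (ℕ × ℕ)) : Table k where
  attrs := T.attrs
  rows := T.rows.filter (fun r => rowSat r α)
  dec := T.dec
  rows_mem := fun r hr => T.rows_mem r (Finset.mem_filter.mp hr).1
  dec_nonempty := fun r hr => T.dec_nonempty r (Finset.mem_filter.mp hr).1

/-- `T ∈ M_k^{∞c}` : the table has a common decision -/
def hasCommon (T : Table k) : Prop := ∃ d : ℕ, ∀ r ∈ T.rows, d ∈ T.dec r

/-- `N(T)` : number of rows -/
def NT (T : Table k) : ℕ := T.rows.card

/-- `W(T)` : number of columns (`0` for the empty table `Λ`) -/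
def WT (T : Table k) : ℕ := if T.rows = ∅ then 0 else T.attrs.card

/-- the closure `[T]` of `T` under removal of columns and changing of decisions:
`Q = J(ν, I(D,T))` for some `D ⊆ At(T)` and some `ν` (the decision labeling of `Q`
on its rows is arbitrary, i.e. is the arbitrary `ν` with nonempty finite values). -/
def closureT (T : Table k) : Set (Table k) :=
  {Q | ∃ D : Finset ℕ, D ⊆ T.attrs ∧ Q.attrs = T.attrs \ D ∧
      Q.rows = T.rows.image (fun r i => if i ∈ T.attrs \ D then r i else 0)}

end Table

/-- a closed class: `[A] = A` -/
def IsClosedClass {k : ℕ} (A : Set (Table k)) : Prop := ∀ T ∈ A, Table.closureT T ⊆ A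

/-- a nontrivial class: contains nonempty tables -/
def NontrivialClass {k : ℕ} (A : Set (Table k)) : Prop := ∃ T ∈ A, T.rows.Nonempty

/-- the part of a `k`-decision tree below one edge leaving the root -/
inductive DTree (k : ℕ) : Type
  | leaf (d : ℕ) : DTree k
  | node (a : ℕ) (n : ℕ) (lab : Fin (n + 1) → ℕ) (ch : Fin (n + 1) → DTree k) : DTree k

namespace DTree

variable {k : ℕ}

/-- the set of pairs (π(τ), terminal decision) over complete paths τ -/
def paths : DTree k → Set (List (ℕ × ℕ) × ℕ)
  | leaf d => {([], d)}
  | node a _ lab ch =>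
      ⋃ i, (fun p : List (ℕ × ℕ) × ℕ => ((a, lab i) :: p.1, p.2)) '' paths (ch i)

/-- edge labels belong to `E_k` -/
def wf : DTree k → Prop
  | leaf _ => True
  | node _ _ lab ch => (∀ i, lab i < k) ∧ ∀ i, wf (ch i)

/-- edges leaving any node are labeled with pairwise different numbers -/
def det : DTree k → Prop
  | leaf _ => True
  | node _ _ lab ch => Function.Injective lab ∧ ∀ i, det (ch i)

/-- the set of attributes attached to nodes -/
def attrs : DTree k → Finset ℕ
  | leaf _ => ∅
  | node a _ _ ch => insert a (Finset.univ.biUnion fun i => attrs (ch i))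

end DTree

/-- a `k`-decision tree: an unlabeled root with `n+1` unlabeled edges leaving it -/
structure KTree (k : ℕ) where
  n : ℕ
  sub : Fin (n + 1) → DTree k

namespace KTree

variable {k : ℕ}

def paths (Γ : KTree k) : Set (List (ℕ × ℕ) × ℕ) := ⋃ i, (Γ.sub i).paths

def wf (Γ : KTree k) : Prop := ∀ i, (Γ.sub i).wf

def attrs (Γ : KTree k) : Finset ℕ := Finset.univ.biUnion fun i => (Γ.sub i).attrs

end KTree

/-- partially bounded complexity measure on words over `P` -/
structure PBCM where
  toFun : List ℕ → ℕ
  pos : ∀ α, toFun α = 0 ↔ α = []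
  perm : ∀ α β, List.Perm α β → toFun α = toFun β
  mono : ∀ α β, toFun α ≤ toFun (α ++ β)
  subadd : ∀ α β, toFun (α ++ β) ≤ toFun α + toFun β

/-- bounded complexity measure -/
structure BCM extends PBCM where
  bdd : ∀ α, α.length ≤ toFun α

/-- extension of ψ to words over pairs `(f_i, δ)` -/
def PBCM.onWord (ψ : PBCM) (α : List (ℕ × ℕ)) : ℕ := ψ.toFun (α.map Prod.fst)

/-- extension of ψ to finite sets of attributes -/
def PBCM.onSet (ψ : PBCM) (s : Finset ℕ) : ℕ := ψ.toFun (s.sort (· ≤ ·))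

/-- the depth `h` -/
def depthCM : BCM where
  toFun := List.length
  pos := fun α => List.length_eq_zero_iff
  perm := fun _ _ h => h.length_eq
  mono := fun α β => by simp
  subadd := fun α β => by simp
  bdd := fun _ => le_rfl

/-- `ψ(Γ)` : complexity of a decision tree -/
def treeComp {k : ℕ} (ψ : PBCM) (Γ : KTree k) : ℕ :=
  sSup {c | ∃ p ∈ Γ.paths, ψ.onWord p.1 = c}

/-- `Γ` is a nondeterministic decision tree for the (nonempty) table `T` -/
def isNDT {k : ℕ} (T : Table k) (Γ : KTree k) : Prop :=
  T.rows.Nonempty ∧ Γ.wf ∧ Γ.attrs ⊆ T.attrs ∧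
  (∀ r ∈ T.rows, ∃ p ∈ Γ.paths, Table.rowSat r p.1) ∧
  (∀ p ∈ Γ.paths, (T.applyWord p.1).rows = ∅ ∨ ∀ r ∈ (T.applyWord p.1).rows, p.2 ∈ T.dec r)

/-- `Γ` is a deterministic decision tree for `T` -/
def isDDT {k : ℕ} (T : Table k) (Γ : KTree k) : Prop :=
  isNDT T Γ ∧ Γ.n = 0 ∧ ∀ i, (Γ.sub i).det

/-- `ψ^a(T)` -/
def psiA {k : ℕ} (ψ : PBCM) (T : Table k) : ℕ :=
  sInf {c | ∃ Γ : KTree k, isNDT T Γ ∧ treeComp ψ Γ = c}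

/-- `ψ^d(T)` -/
def psiD {k : ℕ} (ψ : PBCM) (T : Table k) : ℕ :=
  sInf {c | ∃ Γ : KTree k, isDDT T Γ ∧ treeComp ψ Γ = c}

/-- `m_ψ(T)` -/
def mpsi {k : ℕ} (ψ : PBCM) (T : Table k) : ℕ :=
  if T.rows = ∅ then 0 else T.attrs.sup fun i => ψ.toFun [i]

/-- `W_ψ(T)` -/
def Wpsi {k : ℕ} (ψ : PBCM) (T : Table k) : ℕ :=
  if T.rows = ∅ then 0 else ψ.onSet T.attrs

/-- a tuple `δ̄ ∈ E_k^{|At(T)|}` -/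
def validTuple {k : ℕ} (T : Table k) (δ : ℕ → ℕ) : Prop :=
  (∀ i ∈ T.attrs, δ i < k) ∧ ∀ i ∉ T.attrs, δ i = 0

/-- `M_ψ(T, δ̄)` -/
def MpsiAt {k : ℕ} (ψ : PBCM) (T : Table k) (δ : ℕ → ℕ) : ℕ :=
  sInf {p | ∃ s : Finset ℕ, s ⊆ T.attrs ∧
    (T.applyWord ((s.sort (· ≤ ·)).map fun i => (i, δ i))).hasCommon ∧ ψ.onSet s = p}

/-- `M_ψ(T)` -/
def Mpsi {k : ℕ} (ψ : PBCM) (T : Table k) : ℕ :=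
  if T.hasCommon then 0 else sSup {p | ∃ δ, validTuple T δ ∧ MpsiAt ψ T δ = p}

/-- `U` is a `(ψ,n)`-cover of `T` -/
def isCover {k : ℕ} (ψ : PBCM) (n : ℕ) (T : Table k) (U : Finset (List (ℕ × ℕ))) : Prop :=
  (∀ α ∈ U, T.wordOk α ∧ ψ.onWord α ≤ n) ∧ ∀ r ∈ T.rows, ∃ α ∈ U, Table.rowSat r α

/-- `U` is an irreducible `(ψ,n)`-cover of `T` -/
def isIrredCover {k : ℕ} (ψ : PBCM) (n : ℕ) (T : Table k) (U : Finset (List (ℕ × ℕ))) : Prop :=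
  isCover ψ n T U ∧ ∀ V ⊂ U, ¬ isCover ψ n T V

/-- `l_ψ(T,n)` : maximum cardinality of an irreducible `(ψ,n)`-cover -/
def lpsi {k : ℕ} (ψ : PBCM) (T : Table k) (n : ℕ) : ℕ :=
  sSup {c | ∃ U, isIrredCover ψ n T U ∧ U.card = c}

/-- the set `{ψ^d(T) : T ∈ A, ψ^a(T) ≤ n}`; `H^∞_{ψ,A}(n)` is defined iff this set
is finite, and is then its maximum -/
def HSet {k : ℕ} (ψ : PBCM) (A : Set (Table k)) (n : ℕ) : Set ℕ :=
  {c | ∃ T ∈ A, psiA ψ T ≤ n ∧ psiD ψ T = c}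

/-- `H^∞_{ψ,A}(n)` (as the max = sSup of the finite set `HSet ψ A n`) -/
def Hfun {k : ℕ} (ψ : PBCM) (A : Set (Table k)) (n : ℕ) : ℕ := sSup (HSet ψ A n)

/-- the set `{l_ψ(T,n) : T ∈ A}` -/
def LSet {k : ℕ} (ψ : PBCM) (A : Set (Table k)) (n : ℕ) : Set ℕ :=
  {c | ∃ T ∈ A, lpsi ψ T n = c}

/-- `L_{ψ,A}(n)` -/
def Lfun {k : ℕ} (ψ : PBCM) (A : Set (Table k)) (n : ℕ) : ℕ := sSup (LSet ψ A n)

/-- `H_D` for an infinite `D ⊆ ℕ` : `H_D(n)` is the largest element of `D` that is `≤ n`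
(and `0` if there is none) -/
def HDfun (D : Set ℕ) (n : ℕ) : ℕ := sSup {d | d ∈ D ∧ d ≤ n}

/-- a complete table from `M_2^∞` -/
def isComplete (Q : Table 2) : Prop := Q.NT = 2 ^ Q.attrs.card

/-- `Z(T)` : maximum number of columns in a complete table from `[T]` (`0` if none) -/
def Zt (T : Table 2) : ℕ := sSup {c | ∃ Q ∈ Table.closureT T, isComplete Q ∧ Q.WT = c}

/-- the set `{Z(T) : T ∈ A_ψ(n)}` -/
def ZSet (ψ : PBCM) (A : Set (Table 2)) (n : ℕ) : Set ℕ :=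
  {c | ∃ T ∈ A, mpsi ψ T ≤ n ∧ Zt T = c}

/-- `Z_{ψ,A}(n)` -/
def Zfun (ψ : PBCM) (A : Set (Table 2)) (n : ℕ) : ℕ := sSup (ZSet ψ A n)

/-- annihilating word for `T` -/
def isAnnih (T : Table 2) (α : List (ℕ × ℕ)) : Prop :=
  T.wordOk α ∧ (∀ p ∈ α, ∀ q ∈ α, p.1 = q.1 → p.2 = q.2) ∧ (T.applyWord α).rows = ∅

/-- irreducible annihilating word for `T` -/
def isIrredAnnih (T : Table 2) (α : List (ℕ × ℕ)) : Prop :=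
  isAnnih T α ∧ ∀ β, β.Sublist α → β ≠ α → ¬ isAnnih T β

/-- `G(T)` : maximum length of an irreducible annihilating word (`0` if none) -/
def Gt (T : Table 2) : ℕ := sSup {c | ∃ α, isIrredAnnih T α ∧ α.length = c}

/-- the set `{G(T) : T ∈ A_ψ(n)}` -/
def GSet (ψ : PBCM) (A : Set (Table 2)) (n : ℕ) : Set ℕ :=
  {c | ∃ T ∈ A, mpsi ψ T ≤ n ∧ Gt T = c}

/-- `G_{ψ,A}(n)` -/
def Gfun (ψ : PBCM) (A : Set (Table 2)) (n : ℕ) : ℕ := sSup (GSet ψ A n)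

/-! ### The tables `T_k` and `T_k^*` built from the triangle-shaped graph `G_k` -/

/-- `m(k) = k(k+1)/2` : number of nodes of `G_k` -/
def mnum (k : ℕ) : ℕ := k * (k + 1) / 2

/-- the layer of node `i` of `G_k` : the unique `L` with `m(L-1) < i ≤ m(L)` -/
def layer (i : ℕ) : ℕ := sInf {L | i ≤ mnum L}

/-- left child `l(i) = i + layer i`; right child `p(i) = i + layer i + 1` -/
def lchild (i : ℕ) : ℕ := i + layer i

def rchild (i : ℕ) : ℕ := i + layer i + 1

/-- the map `ν_k : E_2^{m(k)} → P(ω)` -/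
def nuk (k : ℕ) (δ : ℕ → ℕ) : Finset ℕ :=
  (Finset.range (mnum k + 1)).filter fun i =>
    if i = 0 then δ 1 = 0
    else if layer i = k then δ i = 1
    else δ i = 1 ∧ δ (lchild i) = 0 ∧ δ (rchild i) = 0

/-- all tuples over `E_k` supported on the attribute set `s` -/
def allRows (k : ℕ) (s : Finset ℕ) : Finset (ℕ → ℕ) :=
  (s.pi fun _ => Finset.range k).image fun f i => if h : i ∈ s then f i h else 0

/-- the table with attribute set `s`, all possible rows, and decision labeling `d` -/
def fullTable (k : ℕ) (s : Finset ℕ) (d : (ℕ → ℕ) → Finset ℕ) : Table k where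
  attrs := s
  rows := allRows k s
  dec := fun r => if (d r).Nonempty then d r else {0}
  rows_mem := by
    intro r hr
    simp only [allRows, Finset.mem_image] at hr
    obtain ⟨f, hf, rfl⟩ := hr
    refine ⟨fun i hi => ?_, fun i hi => ?_⟩
    · have h := (Finset.mem_pi.mp hf) i hi
      simp only [Finset.mem_range] at h
      simpa [hi] using h
    · simp [hi]
  dec_nonempty := by
    intro r _
    by_cases h : (d r).Nonempty
    · simp [h]
    · simp [h]

/-- the complete table `T_k` with `m(k)` columns `f_1, …, f_{m(k)}` and `2^{m(k)}` rows,
each row `δ̄` labeled with `ν_k(δ̄)` (which is always nonempty) -/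
def Tk (k : ℕ) : Table 2 := fullTable 2 (Finset.Icc 1 (mnum k)) (nuk k)

/-- the `j`-th node of the complete path of `G_k` determined by the choices `c` -/
def pathNode (c : ℕ → Bool) : ℕ → ℕ
  | 0 => 1
  | j + 1 => if c j then lchild (pathNode c j) else rchild (pathNode c j)

/-- `T_k^*` : the subtable of `T_k` whose rows are exactly the characteristic tuples
of complete paths of `G_k` -/
def Tstar (k : ℕ) : Table 2 where
  attrs := (Tk k).attrs
  rows := (Tk k).rows.filter fun r =>
    ∃ c : ℕ → Bool, ∀ i ∈ Finset.Icc 1 (mnum k), (r i = 1 ↔ ∃ j < k, pathNode c j = i)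
  dec := (Tk k).dec
  rows_mem := fun r hr => (Tk k).rows_mem r (Finset.mem_filter.mp hr).1
  dec_nonempty := fun r hr => (Tk k).dec_nonempty r (Finset.mem_filter.mp hr).1

/-- `r(T)` for a subtable `T` of `T_k^*` : the number of distinct decision sets
`ν_k(δ̄)` among the rows `δ̄` of `T` -/
def rnum (k : ℕ) (T : Table 2) : ℕ := (T.rows.image (nuk k)).card

end

/-!
A complete table `Q` with columns `a₀ < ⋯ < a_{c-1}` can be relabelled, inside the closed class,
so that the decisions of a row `r` are the descents of the sequence `1, r a₀, …, r a_{c-1}, 0`.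
Every row has a descent, witnessed by at most two attributes, so nondeterministically the new
table costs at most `2n` when every attribute has complexity at most `n`. But the `c + 1` rows
`1 ⋯ 1 0 ⋯ 0` each have a single, different descent, so a deterministic tree needs at least
`c + 1` leaves and hence depth, and complexity, at least `log₂ (c + 1)`. If `Z_{ψ,A}(n)` is
undefined, `c` is unbounded for tables of attribute complexity at most `n`, and `H^∞_{ψ,A}(2n)`
is undefined.
-/

namespace DTree

variable {k : ℕ}

lemma mem_paths_node {a n : ℕ} {lab : Fin (n + 1) → ℕ} {ch : Fin (n + 1) → DTree k}
    {p : List (ℕ × ℕ) × ℕ} :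
    p ∈ (node a n lab ch).paths ↔ ∃ i, ∃ q ∈ (ch i).paths, ((a, lab i) :: q.1, q.2) = p := by
  simp [paths]

lemma paths_finite (t : DTree k) : t.paths.Finite := by
  induction t with
  | leaf d => exact Set.finite_singleton _
  | node a n lab ch ih => exact Set.finite_iUnion fun i => (ih i).image _

theorem card_le_pow_of_forall_mem_decisions {m : ℕ} {t : DTree (m + 1)} (hwf : t.wf)
    (hdet : t.det) {h : ℕ} (hlen : ∀ p ∈ t.paths, p.1.length ≤ h) {s : Finset ℕ}
    (hs : ∀ d ∈ s, ∃ p ∈ t.paths, p.2 = d) : s.card ≤ (m + 1) ^ h := by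
  induction t generalizing h s with
  | leaf d =>
    calc s.card ≤ ({d} : Finset ℕ).card := Finset.card_le_card fun e he => by
          obtain ⟨p, hp, rfl⟩ := hs e he
          simp_all [paths]
      _ ≤ (m + 1) ^ h := by simpa using Nat.one_le_pow h (m + 1) m.succ_pos
  | node a n lab ch ih =>
    have hlen' : ∀ i, ∀ q ∈ (ch i).paths, q.1.length + 1 ≤ h := fun i q hq =>
      hlen _ (mem_paths_node.2 ⟨i, q, hq, rfl⟩)
    obtain _ | h := h
    · have : s = ∅ := Finset.eq_empty_of_forall_notMem fun d hd => by
        obtain ⟨p, hp, -⟩ := hs d hd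
        obtain ⟨i, q, hq, -⟩ := mem_paths_node.1 hp
        exact absurd (hlen' i q hq) (by omega)
      simp [this]
    have hn : n + 1 ≤ m + 1 := by
      simpa using Fintype.card_le_of_injective (fun i => (⟨lab i, hwf.1 i⟩ : Fin (m + 1)))
        fun i j hij => hdet.1 (congrArg Fin.val hij)
    let sub i := s.filter fun d => ∃ p ∈ (ch i).paths, p.2 = d
    calc s.card ≤ (Finset.univ.biUnion sub).card := Finset.card_le_card fun d hd => by
          obtain ⟨p, hp, rfl⟩ := hs d hd
          obtain ⟨i, q, hq, rfl⟩ := mem_paths_node.1 hp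
          exact Finset.mem_biUnion.2
            ⟨i, Finset.mem_univ i, Finset.mem_filter.2 ⟨hd, q, hq, rfl⟩⟩
      _ ≤ ∑ i, (sub i).card := Finset.card_biUnion_le
      _ ≤ ∑ _i : Fin (n + 1), (m + 1) ^ h := Finset.sum_le_sum fun i _ =>
          ih i (hwf.2 i) (hdet.2 i) (fun q hq => by have := hlen' i q hq; omega)
            fun d hd => (Finset.mem_filter.1 hd).2
      _ = (n + 1) * (m + 1) ^ h := by simp
      _ ≤ (m + 1) ^ (h + 1) := by rw [pow_succ']; exact Nat.mul_le_mul_right _ hn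

end DTree

lemma KTree.paths_finite {k : ℕ} (Γ : KTree k) : Γ.paths.Finite :=
  Set.finite_iUnion fun i => (Γ.sub i).paths_finite

lemma onWord_le_treeComp {k : ℕ} (ψ : PBCM) {Γ : KTree k} {p : List (ℕ × ℕ) × ℕ}
    (hp : p ∈ Γ.paths) : ψ.onWord p.1 ≤ treeComp ψ Γ :=
  le_csSup (Γ.paths_finite.image _).bddAbove ⟨p, hp, rfl⟩

lemma treeComp_le {k : ℕ} (ψ : PBCM) {Γ : KTree k} {b : ℕ}
    (h : ∀ p ∈ Γ.paths, ψ.onWord p.1 ≤ b) : treeComp ψ Γ ≤ b :=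
  csSup_le' fun _ ⟨p, hp, hc⟩ => hc ▸ h p hp

lemma PBCM.toFun_le_length_mul (ψ : PBCM) {n : ℕ} {α : List ℕ}
    (h : ∀ a ∈ α, ψ.toFun [a] ≤ n) : ψ.toFun α ≤ α.length * n := by
  induction α with
  | nil => simp [(ψ.pos []).2 rfl]
  | cons a α ih =>
    calc ψ.toFun (a :: α) = ψ.toFun ([a] ++ α) := rfl
      _ ≤ ψ.toFun [a] + ψ.toFun α := ψ.subadd _ _
      _ ≤ n + α.length * n := add_le_add (h a (by simp)) (ih fun b hb => h b (by simp [hb]))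
      _ = (a :: α).length * n := by simp [add_mul, add_comm]

namespace DTree

variable {k : ℕ}

def ofWord : List (ℕ × ℕ) → ℕ → DTree k
  | [], d => leaf d
  | q :: w, d => node q.1 0 (fun _ => q.2) (fun _ => ofWord w d)

lemma paths_ofWord (w : List (ℕ × ℕ)) (d : ℕ) : (ofWord w d : DTree k).paths = {(w, d)} := by
  induction w with
  | nil => rfl
  | cons q w ih => ext p; simp [ofWord, mem_paths_node, ih, eq_comm]

lemma wf_ofWord {w : List (ℕ × ℕ)} (hw : ∀ q ∈ w, q.2 < k) (d : ℕ) :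
    (ofWord w d : DTree k).wf := by
  induction w with
  | nil => trivial
  | cons q w ih =>
    exact ⟨fun _ => hw q (by simp), fun _ => ih fun q' hq' => hw q' (by simp [hq'])⟩

lemma attrs_ofWord (w : List (ℕ × ℕ)) (d : ℕ) :
    (ofWord w d : DTree k).attrs = (w.map Prod.fst).toFinset := by
  induction w with
  | nil => rfl
  | cons q w ih => simp [ofWord, attrs, ih]

end DTree

def KTree.ofWords {k n : ℕ} (w : Fin (n + 1) → List (ℕ × ℕ) × ℕ) : KTree k :=
  ⟨n, fun i => DTree.ofWord (w i).1 (w i).2⟩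

lemma KTree.paths_ofWords {k n : ℕ} (w : Fin (n + 1) → List (ℕ × ℕ) × ℕ) :
    (ofWords w : KTree k).paths = Set.range w := by
  simp [ofWords, paths, DTree.paths_ofWord, Set.range]

theorem psiA_le_of_certificates {k n b : ℕ} (ψ : PBCM) {T : Table k}
    (w : Fin (n + 1) → List (ℕ × ℕ) × ℕ) (hne : T.rows.Nonempty)
    (hok : ∀ i, T.wordOk (w i).1)
    (hcover : ∀ r ∈ T.rows, ∃ i, Table.rowSat r (w i).1)
    (hcert : ∀ i, ∀ r ∈ T.rows, Table.rowSat r (w i).1 → (w i).2 ∈ T.dec r)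
    (hb : ∀ i, ψ.onWord (w i).1 ≤ b) : psiA ψ T ≤ b := by
  have hΓ : isNDT T (KTree.ofWords w) := by
    refine ⟨hne, fun i => DTree.wf_ofWord (fun q hq => (hok i q hq).2) _, ?_, ?_, ?_⟩
    · intro a ha
      simp only [KTree.attrs, KTree.ofWords, DTree.attrs_ofWord, Finset.mem_biUnion,
        List.mem_toFinset, List.mem_map] at ha
      obtain ⟨i, -, q, hq, rfl⟩ := ha
      exact (hok i q hq).1
    · intro r hr
      obtain ⟨i, hi⟩ := hcover r hr
      exact ⟨w i, by simp [KTree.paths_ofWords], hi⟩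
    · rw [KTree.paths_ofWords]
      rintro _ ⟨i, rfl⟩
      exact Or.inr fun r hr => hcert i r (Finset.mem_filter.1 hr).1 (Finset.mem_filter.1 hr).2
  calc psiA ψ T ≤ treeComp ψ (KTree.ofWords w) := Nat.sInf_le ⟨_, hΓ, rfl⟩
    _ ≤ b := treeComp_le ψ (by rw [KTree.paths_ofWords]; rintro _ ⟨i, rfl⟩; exact hb i)

lemma Table.eq_of_rowSat {k : ℕ} {T : Table k} {r r' : ℕ → ℕ} (hr : r ∈ T.rows)
    (hr' : r' ∈ T.rows) {β : List (ℕ × ℕ)} (hβ : ∀ a ∈ T.attrs, a ∈ β.map Prod.fst)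
    (h : Table.rowSat r β) (h' : Table.rowSat r' β) : r = r' := by
  funext a
  by_cases ha : a ∈ T.attrs
  · obtain ⟨q, hq, rfl⟩ := List.mem_map.1 (hβ a ha)
    rw [h q hq, h' q hq]
  · rw [(T.rows_mem r hr).2 a ha, (T.rows_mem r' hr').2 a ha]

section Exhaustive

variable {m : ℕ} (T : Table (m + 1))

noncomputable def leafDec (β : List (ℕ × ℕ)) : ℕ :=
  if h : ∃ r ∈ T.rows, Table.rowSat r β then
    (T.dec h.choose).min' (T.dec_nonempty _ h.choose_spec.1)
  else 0

/-- Queries the attributes `as` in turn; `β` records the answers so far. -/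
noncomputable def exhaustiveTree : List ℕ → List (ℕ × ℕ) → DTree (m + 1)
  | [], β => .leaf (leafDec T β)
  | a :: as, β => .node a m (fun v => v) (fun v => exhaustiveTree as (β ++ [(a, (v : ℕ))]))

variable {T}

lemma wf_exhaustiveTree (as : List ℕ) (β : List (ℕ × ℕ)) : (exhaustiveTree T as β).wf := by
  induction as generalizing β with
  | nil => trivial
  | cons a as ih => exact ⟨fun v => v.2, fun _ => ih _⟩

lemma det_exhaustiveTree (as : List ℕ) (β : List (ℕ × ℕ)) :
    (exhaustiveTree T as β).det := by
  induction as generalizing β with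
  | nil => trivial
  | cons a as ih => exact ⟨fun _ _ h => Fin.ext h, fun _ => ih _⟩

lemma attrs_exhaustiveTree_subset (as : List ℕ) (β : List (ℕ × ℕ)) :
    (exhaustiveTree T as β).attrs ⊆ as.toFinset := by
  induction as generalizing β with
  | nil => exact Finset.empty_subset _
  | cons a as ih =>
    intro x hx
    simp only [exhaustiveTree, DTree.attrs, Finset.mem_insert, Finset.mem_biUnion] at hx
    rcases hx with rfl | ⟨v, -, hv⟩
    · simp
    · simpa using Or.inr (List.mem_toFinset.1 (ih _ hv))

lemma mem_paths_exhaustiveTree {as : List ℕ} {β : List (ℕ × ℕ)} {p : List (ℕ × ℕ) × ℕ}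
    (hp : p ∈ (exhaustiveTree T as β).paths) :
    p.1.map Prod.fst = as ∧ p.2 = leafDec T (β ++ p.1) := by
  induction as generalizing β p with
  | nil =>
    obtain rfl : p = ([], leafDec T β) := hp
    simp
  | cons a as ih =>
    obtain ⟨v, q, hq, rfl⟩ := DTree.mem_paths_node.1 hp
    obtain ⟨h1, h2⟩ := ih hq
    exact ⟨by simp [h1], by simp [h2]⟩

lemma exists_rowSat_exhaustiveTree (as : List ℕ) (β : List (ℕ × ℕ)) {r : ℕ → ℕ}
    (hr : ∀ a ∈ as, r a < m + 1) :
    ∃ p ∈ (exhaustiveTree T as β).paths, Table.rowSat r p.1 := by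
  induction as generalizing β with
  | nil => exact ⟨_, rfl, fun q hq => absurd hq List.not_mem_nil⟩
  | cons a as ih =>
    obtain ⟨q, hq, hsat⟩ := ih (β ++ [(a, r a)]) fun x hx => hr x (by simp [hx])
    refine ⟨((a, r a) :: q.1, q.2),
      DTree.mem_paths_node.2 ⟨⟨r a, hr a (by simp)⟩, q, hq, rfl⟩, ?_⟩
    rintro x (_ | ⟨_, hx⟩)
    exacts [rfl, hsat x hx]

variable (T)

noncomputable def exhaustiveKTree : KTree (m + 1) :=
  ⟨0, fun _ => exhaustiveTree T (T.attrs.sort (· ≤ ·)) []⟩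

variable {T}

lemma isDDT_exhaustiveKTree (hne : T.rows.Nonempty) : isDDT T (exhaustiveKTree T) := by
  have hsort (a : ℕ) : a ∈ T.attrs.sort (· ≤ ·) ↔ a ∈ T.attrs := Finset.mem_sort _
  refine ⟨⟨hne, fun _ => wf_exhaustiveTree _ _, ?_, ?_, ?_⟩, rfl,
    fun _ => det_exhaustiveTree _ _⟩
  · intro x hx
    obtain ⟨_, -, hx⟩ := Finset.mem_biUnion.1 hx
    exact (hsort x).1 (List.mem_toFinset.1 (attrs_exhaustiveTree_subset _ _ hx))
  · intro r hr
    obtain ⟨p, hp, hsat⟩ := exists_rowSat_exhaustiveTree (T := T) _ []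
      fun a ha => (T.rows_mem r hr).1 a ((hsort a).1 ha)
    exact ⟨p, Set.mem_iUnion.2 ⟨0, hp⟩, hsat⟩
  · intro p hp
    obtain ⟨_, hp⟩ := Set.mem_iUnion.1 hp
    obtain ⟨hmap, hdec⟩ := mem_paths_exhaustiveTree hp
    refine Or.inr fun r hr => ?_
    obtain ⟨hrT, hrp⟩ := Finset.mem_filter.1 hr
    have hex : ∃ r ∈ T.rows, Table.rowSat r p.1 := ⟨r, hrT, hrp⟩
    have hrow : hex.choose = r := Table.eq_of_rowSat hex.choose_spec.1 hrT
      (fun a ha => hmap ▸ (hsort a).2 ha) hex.choose_spec.2 hrp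
    rw [hdec, List.nil_append, leafDec, dif_pos hex]
    exact hrow ▸ Finset.min'_mem _ _

lemma exists_isDDT_treeComp_eq_psiD (ψ : PBCM) (hne : T.rows.Nonempty) :
    ∃ Γ : KTree (m + 1), isDDT T Γ ∧ treeComp ψ Γ = psiD ψ T :=
  Nat.sInf_mem (s := {c | ∃ Γ, isDDT T Γ ∧ treeComp ψ Γ = c})
    ⟨_, _, isDDT_exhaustiveKTree hne, rfl⟩

theorem card_le_pow_psiD (ψ : BCM) {s : Finset ℕ}
    (hs : ∀ d ∈ s, ∃ r ∈ T.rows, T.dec r = {d}) :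
    s.card ≤ (m + 1) ^ psiD ψ.toPBCM T := by
  obtain rfl | ⟨d, hd⟩ := s.eq_empty_or_nonempty
  · simp
  obtain ⟨r, hr, -⟩ := hs d hd
  obtain ⟨Γ, ⟨⟨-, hwf, -, hcover, hcorrect⟩, hn, hdet⟩, hΓ⟩ :=
    exists_isDDT_treeComp_eq_psiD ψ.toPBCM ⟨r, hr⟩
  have hsub : ∀ p ∈ Γ.paths, p ∈ (Γ.sub 0).paths := fun p hp => by
    obtain ⟨i, hi⟩ := Set.mem_iUnion.1 hp
    rwa [show i = 0 from Fin.ext (by omega)] at hi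
  refine DTree.card_le_pow_of_forall_mem_decisions (hwf 0) (hdet 0) (fun p hp => ?_) fun d hd => ?_
  · calc p.1.length = (p.1.map Prod.fst).length := (List.length_map _).symm
      _ ≤ ψ.onWord p.1 := ψ.bdd _
      _ ≤ psiD ψ.toPBCM T := hΓ ▸ onWord_le_treeComp _ (Set.mem_iUnion.2 ⟨0, hp⟩)
  · obtain ⟨r, hr, hdec⟩ := hs d hd
    obtain ⟨p, hp, hsat⟩ := hcover r hr
    have hrp : r ∈ (T.applyWord p.1).rows := Finset.mem_filter.2 ⟨hr, hsat⟩
    refine ⟨p, hsub p hp, ?_⟩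
    rcases hcorrect p hp with hempty | hcommon
    · simp [hempty] at hrp
    · simpa [hdec] using hcommon r hrp

end Exhaustive

lemma List.getD_mem {α : Type*} {l : List α} {t : ℕ} {d : α} (ht : t < l.length) :
    l.getD t d ∈ l := by
  rw [List.getD_eq_getElem l d ht]
  exact List.getElem_mem ht

section Staircase

variable {l : List ℕ} {r : ℕ → ℕ} {i : ℕ}

/-- Position `i ≤ l.length` is a descent of the sequence `1, r l₀, …, r l_{len-1}, 0`. -/
def IsStairDescent (l : List ℕ) (r : ℕ → ℕ) (i : ℕ) : Prop :=
  (0 < i → r (l.getD (i - 1) 0) = 1) ∧ (i < l.length → r (l.getD i 0) = 0)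

noncomputable def stairDec (l : List ℕ) (r : ℕ → ℕ) : Finset ℕ :=
  (Finset.range (l.length + 1)).filter (IsStairDescent l r)

def stairWord (l : List ℕ) (i : ℕ) : List (ℕ × ℕ) :=
  (if 0 < i then [(l.getD (i - 1) 0, 1)] else []) ++
    (if i < l.length then [(l.getD i 0, 0)] else [])

lemma rowSat_stairWord_iff : Table.rowSat r (stairWord l i) ↔ IsStairDescent l r i := by
  unfold Table.rowSat stairWord IsStairDescent
  split_ifs <;> simp_all

lemma mem_stairDec_iff : i ∈ stairDec l r ↔ i ≤ l.length ∧ IsStairDescent l r i := by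
  simp [stairDec]

lemma length_stairWord_le : (stairWord l i).length ≤ 2 := by
  unfold stairWord
  split_ifs <;> simp

lemma mem_stairWord {q : ℕ × ℕ} (hq : q ∈ stairWord l i) (hi : i ≤ l.length) :
    q.1 ∈ l ∧ q.2 < 2 := by
  unfold stairWord at hq
  split_ifs at hq <;> simp only [List.mem_append, List.mem_singleton, List.not_mem_nil,
    or_false, false_or] at hq <;> rcases hq with rfl | rfl <;>
    exact ⟨List.getD_mem (by omega), by norm_num⟩

lemma exists_isStairDescent (hr : ∀ a ∈ l, r a < 2) :
    ∃ i ≤ l.length, IsStairDescent l r i := by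
  have hP : ∃ j, j < l.length → r (l.getD j 0) = 0 :=
    ⟨l.length, fun h => absurd h (lt_irrefl _)⟩
  refine ⟨Nat.find hP, Nat.find_min' hP fun h => absurd h (lt_irrefl _), fun hpos => ?_,
    Nat.find_spec hP⟩
  have hprev := Nat.find_min hP (Nat.sub_one_lt_of_lt hpos)
  obtain ⟨hlt, hne⟩ := Classical.not_imp.1 hprev
  have := hr _ (List.getD_mem (d := 0) hlt)
  omega

def prefixRow (l : List ℕ) (j : ℕ) : ℕ → ℕ := fun a => if a ∈ l.take j then 1 else 0

lemma prefixRow_getD (hl : l.Nodup) {j t : ℕ} (ht : t < l.length) :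
    prefixRow l j (l.getD t 0) = if t < j then 1 else 0 := by
  rw [List.getD_eq_getElem l 0 ht, prefixRow]
  congr 1
  refine propext ⟨fun hmem => ?_, fun htj => List.mem_take_iff_getElem.2 ⟨t, by omega, rfl⟩⟩
  obtain ⟨u, hu, hequ⟩ := List.mem_take_iff_getElem.1 hmem
  have := (hl.getElem_inj_iff).1 hequ
  omega

lemma stairDec_prefixRow (hl : l.Nodup) {j : ℕ} (hj : j ≤ l.length) :
    stairDec l (prefixRow l j) = {j} := by
  ext i
  rw [mem_stairDec_iff, Finset.mem_singleton, IsStairDescent]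
  constructor
  · rintro ⟨hi, h1, h0⟩
    by_contra hne
    rcases Nat.lt_or_gt_of_ne hne with hlt | hgt
    · have := h0 (by omega)
      rw [prefixRow_getD hl (by omega), if_pos hlt] at this
      omega
    · have := h1 (by omega)
      rw [prefixRow_getD hl (by omega), if_neg (by omega)] at this
      omega
  · rintro rfl
    refine ⟨hj, fun hpos => ?_, fun hlt => ?_⟩
    · rw [prefixRow_getD hl (by omega), if_pos (by omega)]
    · rw [prefixRow_getD hl hlt, if_neg (lt_irrefl _)]

end Staircase

lemma Table.mem_closureT_of_attrs_eq_of_rows_eq {k : ℕ} {T Q : Table k}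
    (hattrs : Q.attrs = T.attrs) (hrows : Q.rows = T.rows) : Q ∈ T.closureT := by
  refine ⟨∅, Finset.empty_subset _, by simpa using hattrs, ?_⟩
  rw [hrows, Finset.sdiff_empty]
  refine ((Finset.image_congr fun r hr => funext fun a => ?_).trans
    (Finset.image_id (s := T.rows))).symm
  by_cases ha : a ∈ T.attrs
  · simp [ha]
  · simp [ha, (T.rows_mem r hr).2 a ha]

noncomputable def stairTable (Q : Table 2) : Table 2 where
  attrs := Q.attrs
  rows := Q.rows
  dec := stairDec (Q.attrs.sort (· ≤ ·))
  rows_mem := Q.rows_mem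
  dec_nonempty r hr := by
    obtain ⟨i, hi, hdesc⟩ := exists_isStairDescent (l := Q.attrs.sort (· ≤ ·))
      fun a ha => (Q.rows_mem r hr).1 a ((Finset.mem_sort _).1 ha)
    exact ⟨i, mem_stairDec_iff.2 ⟨hi, hdesc⟩⟩

lemma stairTable_mem_closureT (Q : Table 2) : stairTable Q ∈ Q.closureT :=
  Table.mem_closureT_of_attrs_eq_of_rows_eq rfl rfl

theorem psiA_stairTable_le (ψ : PBCM) {Q : Table 2} {n : ℕ} (hne : Q.rows.Nonempty)
    (hψ : ∀ a ∈ Q.attrs, ψ.toFun [a] ≤ n) : psiA ψ (stairTable Q) ≤ 2 * n := by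
  set l := Q.attrs.sort (· ≤ ·)
  have hl (a : ℕ) : a ∈ l ↔ a ∈ Q.attrs := Finset.mem_sort _
  refine psiA_le_of_certificates ψ (n := l.length) (fun i => (stairWord l i, i)) hne
    (fun i q hq => ?_) (fun r hr => ?_) (fun i r _ hsat => ?_) fun i => ?_
  · obtain ⟨hq1, hq2⟩ := mem_stairWord hq (Nat.lt_succ_iff.1 i.2)
    exact ⟨(hl _).1 hq1, hq2⟩
  · obtain ⟨i, hi, hdesc⟩ := exists_isStairDescent
      fun a ha => (Q.rows_mem r hr).1 a ((hl a).1 ha)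
    exact ⟨⟨i, Nat.lt_succ_of_le hi⟩, rowSat_stairWord_iff.2 hdesc⟩
  · exact mem_stairDec_iff.2 ⟨Nat.lt_succ_iff.1 i.2, rowSat_stairWord_iff.1 hsat⟩
  · calc ψ.onWord (stairWord l i) ≤ ((stairWord l i).map Prod.fst).length * n :=
          ψ.toFun_le_length_mul fun a ha => by
            obtain ⟨q, hq, rfl⟩ := List.mem_map.1 ha
            exact hψ _ ((hl _).1 (mem_stairWord hq (Nat.lt_succ_iff.1 i.2)).1)
      _ ≤ 2 * n := by
          rw [List.length_map]
          exact Nat.mul_le_mul_right _ length_stairWord_le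

lemma mem_allRows {k : ℕ} {s : Finset ℕ} {r : ℕ → ℕ} (h1 : ∀ i ∈ s, r i < k)
    (h2 : ∀ i ∉ s, r i = 0) : r ∈ allRows k s := by
  refine Finset.mem_image.2 ⟨fun i _ => r i,
    Finset.mem_pi.2 fun i hi => Finset.mem_range.2 (h1 i hi), funext fun i => ?_⟩
  by_cases hi : i ∈ s
  · simp [hi]
  · simp [hi, h2 i hi]

lemma card_allRows_le (k : ℕ) (s : Finset ℕ) : (allRows k s).card ≤ k ^ s.card :=
  Finset.card_image_le.trans (by simp [Finset.card_pi])

lemma rows_eq_allRows_of_isComplete {Q : Table 2} (hc : isComplete Q) :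
    Q.rows = allRows 2 Q.attrs :=
  Finset.eq_of_subset_of_card_le (fun r hr => mem_allRows (Q.rows_mem r hr).1 (Q.rows_mem r hr).2)
    ((card_allRows_le _ _).trans hc.ge)

theorem card_attrs_lt_two_pow_psiD_stairTable (ψ : BCM) {Q : Table 2} (hc : isComplete Q) :
    Q.attrs.card < 2 ^ psiD ψ.toPBCM (stairTable Q) := by
  set l := Q.attrs.sort (· ≤ ·)
  have hlen : l.length = Q.attrs.card := Finset.length_sort _
  have hrow (j : ℕ) : prefixRow l j ∈ Q.rows := by
    rw [rows_eq_allRows_of_isComplete hc]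
    refine mem_allRows (fun a _ => ?_) fun a ha => if_neg fun hmem => ha ?_
    · unfold prefixRow; split_ifs <;> omega
    · exact (Finset.mem_sort _).1 (List.take_subset _ _ hmem)
  have := card_le_pow_psiD ψ (T := stairTable Q) (s := Finset.range (l.length + 1))
    fun j hj => ⟨prefixRow l j, hrow j,
      stairDec_prefixRow (Q.attrs.sort_nodup _) (Nat.lt_succ_iff.1 (Finset.mem_range.1 hj))⟩
  rw [Finset.card_range, hlen] at this
  exact this

lemma exists_isComplete_of_Zt_pos {T : Table 2} (h : 0 < Zt T) :
    ∃ Q ∈ T.closureT, isComplete Q ∧ Q.WT = Zt T := by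
  have hbdd : BddAbove {c | ∃ Q ∈ T.closureT, isComplete Q ∧ Q.WT = c} := by
    refine ⟨T.attrs.card, ?_⟩
    rintro _ ⟨Q, ⟨D, -, hattrs, -⟩, -, rfl⟩
    unfold Table.WT
    split_ifs
    exacts [Nat.zero_le _, hattrs ▸ Finset.card_le_card Finset.sdiff_subset]
  refine Nat.sSup_mem (Set.nonempty_iff_ne_empty.2 fun hempty => ?_) hbdd
  simp [Zt, hempty] at h

lemma toFun_singleton_le_mpsi {k : ℕ} (ψ : PBCM) {T Q : Table k} (hQ : Q ∈ T.closureT)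
    (hne : Q.rows.Nonempty) {a : ℕ} (ha : a ∈ Q.attrs) : ψ.toFun [a] ≤ mpsi ψ T := by
  obtain ⟨D, -, hattrs, hrows⟩ := hQ
  have hT : T.rows ≠ ∅ := fun h => by simp [hrows, h] at hne
  rw [mpsi, if_neg hT]
  exact Finset.le_sup (f := fun i => ψ.toFun [i]) (Finset.mem_sdiff.1 (hattrs ▸ ha)).1

theorem stmt14_general (A : Set (Table 2)) (hclosed : IsClosedClass A)
    (ψ : BCM)
    (hZ : ¬ ∀ n, (ZSet ψ.toPBCM A n).Finite) :
    ¬ ∀ n, (HSet ψ.toPBCM A n).Finite := by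
  intro hH
  obtain ⟨n, hn⟩ := not_forall.1 hZ
  obtain ⟨b, hb⟩ := (hH (2 * n)).bddAbove
  obtain ⟨_, ⟨T, hTA, hmT, rfl⟩, hbig⟩ := Set.Infinite.exists_gt hn (2 ^ b)
  obtain ⟨Q, hQT, hQc, hQW⟩ := exists_isComplete_of_Zt_pos (Nat.zero_lt_of_lt hbig)
  have hQne : Q.rows.Nonempty := Finset.nonempty_iff_ne_empty.2 fun h => by
    rw [Table.WT, if_pos h] at hQW
    exact Nat.not_lt_zero _ (hQW ▸ hbig)
  have hcard : Q.attrs.card = Zt T := by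
    rwa [Table.WT, if_neg hQne.ne_empty] at hQW
  have hA : psiA ψ.toPBCM (stairTable Q) ≤ 2 * n := psiA_stairTable_le ψ.toPBCM hQne
    fun a ha => (toFun_singleton_le_mpsi ψ.toPBCM hQT hQne ha).trans hmT
  have hD : psiD ψ.toPBCM (stairTable Q) ≤ b :=
    hb ⟨_, hclosed Q (hclosed T hTA hQT) (stairTable_mem_closureT Q), hA, rfl⟩
  have := card_attrs_lt_two_pow_psiD_stairTable ψ hQc
  have := Nat.pow_le_pow_right two_pos hD
  omega

/-- **Lemma (7M8).** If `Z_{ψ,A}` is not everywhere defined, then `H^∞_{ψ,A}` is not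
everywhere defined. -/
theorem stmt14 (A : Set (Table 2)) (hclosed : IsClosedClass A)
    (hnontriv : NontrivialClass A) (ψ : BCM)
    (hZ : ¬ ∀ n, (ZSet ψ.toPBCM A n).Finite) :
    ¬ ∀ n, (HSet ψ.toPBCM A n).Finite :=
  stmt14_general A hclosed ψ hZ
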